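/- arXiv:1205.3522 — 5 statements merged into one kernel-verified Lean document; each statement's English description precedes it below -/
import Mathlib

section
/- Let V be a set with coloring f : [V]² → M satisfying property (3), where M is a linear order in which every strictly increasing κ⁺-sequence is cofinal in no proper initial segment containing all colors used (specifically: any strictly increasing sequence of length κ⁺ in M eventually exceeds any fixed element of M). Then for any selector sequence ⟨A_α : α < κ⁺⟩ (defined by A₀ ⊆ V, A_λ = ⋂_{α<λ} A_α at limits, and A_{α+1} = {v ∈ A_α : f{v, v_α} = λ_α} for some chosen v_α ∈ A_α and strictly increasing colors λ_α), the intersection ⋂_{α<κ⁺} A_α has at most one element. -/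
/-!
If two distinct vertices `x ≠ y` survive every stage, choose a stage `α` with `f x y < λ_α`
(cofinality). Both `x` and `y` lie in `A_{α+1}`, so both edges to `v_α` have color `λ_α`, and
property (3) applied to the triangle `v_α, x, y` forces `λ_α < f x y`.
-/

theorem lt_of_color_eq_color {V M : Type*} [LinearOrder M] {f : V → V → M}
    (h3 : ∀ a₀ a₁ a₂ : V, a₀ ≠ a₁ → a₀ ≠ a₂ → a₁ ≠ a₂ → f a₀ a₁ = f a₀ a₂ → f a₀ a₁ < f a₁ a₂)
    {w x y : V} {c : M} (hxy : x ≠ y) (hwx : w ≠ x) (hwy : w ≠ y)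
    (hx : f w x = c) (hy : f w y = c) : c < f x y :=
  hx ▸ h3 w x y hwx hwy hxy (hx.trans hy.symm)

theorem lt_color_of_mem_succ {V M : Type*} [LinearOrder M] {f : V → V → M}
    (hsymm : ∀ a b : V, f a b = f b a)
    (h3 : ∀ a₀ a₁ a₂ : V, a₀ ≠ a₁ → a₀ ≠ a₂ → a₁ ≠ a₂ → f a₀ a₁ = f a₀ a₂ → f a₀ a₁ < f a₁ a₂)
    {A : Ordinal → Set V} {v : Ordinal → V} {lam : Ordinal → M} {α : Ordinal}
    (hempty : A α = ∅ → A (α + 1) = ∅)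
    (hstep : (A α).Nonempty → A (α + 1) = {x ∈ A α | x ≠ v α ∧ f x (v α) = lam α})
    {x y : V} (hx : x ∈ A (α + 1)) (hy : y ∈ A (α + 1)) (hxy : x ≠ y) : lam α < f x y := by
  have hne : (A α).Nonempty := by
    by_contra h
    rw [hempty (Set.not_nonempty_iff_eq_empty.mp h)] at hx
    exact hx
  rw [hstep hne] at hx hy
  obtain ⟨-, hxv, hfx⟩ := hx
  obtain ⟨-, hyv, hfy⟩ := hy
  exact lt_of_color_eq_color h3 hxy hxv.symm hyv.symm
    ((hsymm _ _).trans hfx) ((hsymm _ _).trans hfy)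

theorem stmt5_general {V M : Type u} [LinearOrder M] (f : V → V → M)
    (hsymm : ∀ a b : V, f a b = f b a)
    (h3 : ∀ a₀ a₁ a₂ : V, a₀ ≠ a₁ → a₀ ≠ a₂ → a₁ ≠ a₂ →
      (f a₀ a₁ ≠ f a₀ a₂ → f a₁ a₂ = min (f a₀ a₁) (f a₀ a₂)) ∧
      (f a₀ a₁ = f a₀ a₂ → f a₀ a₁ < f a₁ a₂))
    (κ : Cardinal.{u}) (hκ : Cardinal.aleph0 ≤ κ)
    (A : Ordinal.{u} → Set V) (v : Ordinal.{u} → V) (lam : Ordinal.{u} → M)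
    -- at successor stages, select those vertices whose edge to `v α` has color `lam α`
    (hsucc : ∀ α, α + 1 < (Order.succ κ).ord →
      (A α = ∅ → A (α + 1) = ∅) ∧
      ((A α).Nonempty → v α ∈ A α ∧
        A (α + 1) = {x ∈ A α | x ≠ v α ∧ f x (v α) = lam α}))
    -- an increasing κ⁺-sequence of colors is cofinal in `M`
    (hcof : ∀ m : M, ∃ α < (Order.succ κ).ord, m < lam α) :
    Set.Subsingleton (⋂ α ∈ Set.Iio (Order.succ κ).ord, A α) := by
  intro x hx y hy
  by_contra hxy
  have hlimit : Order.IsSuccLimit (Order.succ κ).ord :=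
    Cardinal.isSuccLimit_ord (hκ.trans (Order.le_succ κ))
  obtain ⟨α, hα, hlt⟩ := hcof (f x y)
  have hα1 : α + 1 < (Order.succ κ).ord := Order.succ_eq_add_one α ▸ hlimit.succ_lt hα
  have hmem : ∀ z ∈ ⋂ α ∈ Set.Iio (Order.succ κ).ord, A α, z ∈ A (α + 1) :=
    fun z hz => Set.mem_iInter₂.mp hz _ hα1
  have hstep := hsucc α hα1
  exact lt_asymm hlt <| lt_color_of_mem_succ hsymm
    (fun a₀ a₁ a₂ h₀₁ h₀₂ h₁₂ => (h3 a₀ a₁ a₂ h₀₁ h₀₂ h₁₂).2) hstep.1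
    (fun h => (hstep.2 h).2) (hmem x hx) (hmem y hy) hxy

/-- For any selector sequence `⟨A_α : α < κ⁺⟩` (built by choosing vertices `v_α` and
strictly increasing, cofinal colors `λ_α`), the intersection `⋂_{α<κ⁺} A_α` has at
most one element. -/
theorem stmt5 {V M : Type u} [LinearOrder M] (f : V → V → M)
    (hsymm : ∀ a b : V, f a b = f b a)
    (h3 : ∀ a₀ a₁ a₂ : V, a₀ ≠ a₁ → a₀ ≠ a₂ → a₁ ≠ a₂ →
      (f a₀ a₁ ≠ f a₀ a₂ → f a₁ a₂ = min (f a₀ a₁) (f a₀ a₂)) ∧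
      (f a₀ a₁ = f a₀ a₂ → f a₀ a₁ < f a₁ a₂))
    (κ : Cardinal.{u}) (hκ : Cardinal.aleph0 ≤ κ)
    (A : Ordinal.{u} → Set V) (v : Ordinal.{u} → V) (lam : Ordinal.{u} → M)
    -- at limit stages, take intersections
    (hlim : ∀ α < (Order.succ κ).ord, Order.IsSuccLimit α → A α = ⋂ β ∈ Set.Iio α, A β)
    -- at successor stages, select those vertices whose edge to `v α` has color `lam α`
    (hsucc : ∀ α, α + 1 < (Order.succ κ).ord →
      (A α = ∅ → A (α + 1) = ∅) ∧
      ((A α).Nonempty → v α ∈ A α ∧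
        A (α + 1) = {x ∈ A α | x ≠ v α ∧ f x (v α) = lam α}))
    -- the colors are strictly increasing
    (hmono : ∀ α β, α < β → β < (Order.succ κ).ord → lam α < lam β)
    -- an increasing κ⁺-sequence of colors is cofinal in `M`
    (hcof : ∀ m : M, ∃ α < (Order.succ κ).ord, m < lam α) :
    Set.Subsingleton (⋂ α ∈ Set.Iio (Order.succ κ).ord, A α) :=
  stmt5_general f hsymm h3 κ hκ A v lam hsucc hcof
end

section
/- The class K of finite structures (V, f) over a fixed countable colored linear order M—where V is a finite vertex set and f : [V]² → M satisfies property (3)—has the joint embedding property: if A ∈ K embeds into both B ∈ K and C ∈ K with B ∩ C = A, then f can be extended to B ∪ C so that the result is in K. -/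
/-- Property (3) of the paper, restricted to a set `S` of vertices. -/
def Prop3On {V M : Type*} [LinearOrder M] (f : V → V → M) (S : Set V) : Prop :=
  ∀ a₀ ∈ S, ∀ a₁ ∈ S, ∀ a₂ ∈ S, a₀ ≠ a₁ → a₀ ≠ a₂ → a₁ ≠ a₂ →
    (f a₀ a₁ ≠ f a₀ a₂ → f a₁ a₂ = min (f a₀ a₁) (f a₀ a₂)) ∧
    (f a₀ a₁ = f a₀ a₂ → f a₀ a₁ < f a₁ a₂)

/-!
Property (3) says that in every triangle the smallest value occurs exactly twice, so `f` behaves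
like an ultrametric read upside down, without equilateral triangles. Amalgamate over `A = B ∩ C`:
a pair `b ∈ B \ C`, `c ∈ C \ B` separated by some `a ∈ A` (`f a b ≠ f a c`) gets the value
`min (f a b) (f a c)`, which does not depend on `a`. If no `a ∈ A` separates them, they get a fresh
value above all `f a b` (`a ∈ A`) and below every larger value of `f` on `B ∪ C`; density and the
absence of endpoints make room for it. It then lies below `f b b'` whenever `b, b' ∈ B \ C` agree
against all of `A`, which rules out an equilateral triangle `b b' c`.
-/

open Set

section Amalgamation

variable {V M : Type*} [LinearOrder M]

def Isosceles (u v w : M) : Prop :=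
  (u = v ∧ u < w) ∨ (u = w ∧ u < v) ∨ (v = w ∧ v < u)

namespace Isosceles

variable {u v w : M}

theorem swap_left (h : Isosceles u v w) : Isosceles v u w := by
  unfold Isosceles at *; grind

theorem swap_right (h : Isosceles u v w) : Isosceles u w v := by
  unfold Isosceles at *; grind

theorem rotate (h : Isosceles u v w) : Isosceles v w u := by
  unfold Isosceles at *; grind

theorem lt_of_eq (h : Isosceles u v w) (huv : u = v) : u < w := by
  unfold Isosceles at *; grind

end Isosceles

theorem isosceles_iff {u v w : M} :
    Isosceles u v w ↔ (u ≠ v → w = min u v) ∧ (u = v → u < w) := by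
  unfold Isosceles; grind

theorem isosceles_min_of_ne {u v : M} (h : u ≠ v) : Isosceles u v (min u v) :=
  isosceles_iff.2 ⟨fun _ => rfl, fun h' => absurd h' h⟩

theorem min_eq_min_of_isosceles {x p p' q q' : M} (hp : Isosceles x p p')
    (hq : Isosceles x q q') (hpq : p ≠ q) (hpq' : p' ≠ q') : min p q = min p' q' := by
  unfold Isosceles at *; grind

theorem lt_min_of_isosceles {x p p' q' : M} (hp : Isosceles x p p') (hq : Isosceles x p q')
    (hpq' : p' ≠ q') : p < min p' q' := by
  unfold Isosceles at *; grind

theorem isosceles_min_of_lt {x p p' w : M} (h : Isosceles p p' x) (hpp' : p ≠ p')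
    (hw : p' < w) : Isosceles x (min p p') w := by
  unfold Isosceles at *; grind

theorem isosceles_min_min {x p p' q : M} (h : Isosceles p p' x) (hpq : p ≠ q) (hp'q : p' ≠ q) :
    Isosceles x (min p q) (min p' q) := by
  unfold Isosceles at *; grind

theorem prop3On_iff {f : V → V → M} {S : Set V} :
    Prop3On f S ↔ ∀ a ∈ S, ∀ b ∈ S, ∀ c ∈ S, a ≠ b → a ≠ c → b ≠ c →
      Isosceles (f a b) (f a c) (f b c) := by
  simp only [Prop3On, isosceles_iff]

theorem Prop3On.isosceles {f : V → V → M} {S : Set V} (h : Prop3On f S) {a b c : V}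
    (ha : a ∈ S) (hb : b ∈ S) (hc : c ∈ S) (hab : a ≠ b) (hac : a ≠ c) (hbc : b ≠ c) :
    Isosceles (f a b) (f a c) (f b c) :=
  prop3On_iff.1 h a ha b hb c hc hab hac hbc

noncomputable def gapAbove [Nonempty M] (S T : Set M) : M :=
  Classical.epsilon fun m => (∀ s ∈ S, s < m) ∧ ∀ t ∈ T, (∀ s ∈ S, s < t) → m < t

theorem gapAbove_spec [Nonempty M] [DenselyOrdered M] [NoMaxOrder M] [NoMinOrder M]
    {S T : Set M} (hS : S.Finite) (hT : T.Finite) :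
    (∀ s ∈ S, s < gapAbove S T) ∧ ∀ t ∈ T, (∀ s ∈ S, s < t) → gapAbove S T < t := by
  refine Classical.epsilon_spec
    (p := fun m => (∀ s ∈ S, s < m) ∧ ∀ t ∈ T, (∀ s ∈ S, s < t) → m < t) ?_
  obtain ⟨m, hSm, hmT⟩ := hS.exists_between' (hT.sep fun t => ∀ s ∈ S, s < t)
    fun s hs t ht => ht.2 s hs
  exact ⟨m, hSm, fun t ht hSt => hmT t ⟨ht, hSt⟩⟩

/-- The value of a pair `b ∈ B \ C`, `c ∈ C \ B`, for `A = B ∩ C` and `U = B ∪ C`. -/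
noncomputable def crossValue [Nonempty M] (A U : Set V) (f : V → V → M) (b c : V) : M :=
  open Classical in
  if h : ∃ a ∈ A, f a b ≠ f a c then min (f h.choose b) (f h.choose c)
  else gapAbove ((f · b) '' A) (image2 f U U)

variable [Nonempty M] {A B C U : Set V} {f : V → V → M} {a b c : V}

theorem crossValue_eq_min (h3B : Prop3On f B) (h3C : Prop3On f C) (ha : a ∈ B ∩ C)
    (hb : b ∈ B \ C) (hc : c ∈ C \ B) (hne : f a b ≠ f a c) :
    crossValue (B ∩ C) U f b c = min (f a b) (f a c) := by
  have h : ∃ a ∈ B ∩ C, f a b ≠ f a c := ⟨a, ha, hne⟩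
  obtain ⟨ha', hne'⟩ := h.choose_spec
  rw [crossValue, dif_pos h]
  rcases eq_or_ne h.choose a with heq | ha'a
  · rw [heq]
  · exact min_eq_min_of_isosceles
      (h3B.isosceles ha'.1 ha.1 hb.1 ha'a (ne_of_mem_of_not_mem ha'.2 hb.2)
        (ne_of_mem_of_not_mem ha.2 hb.2))
      (h3C.isosceles ha'.2 ha.2 hc.1 ha'a (ne_of_mem_of_not_mem ha'.1 hc.2)
        (ne_of_mem_of_not_mem ha.1 hc.2))
      hne' hne

theorem crossValue_eq_gapAbove (h : ∀ a ∈ A, f a b = f a c) :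
    crossValue A U f b c = gapAbove ((f · b) '' A) (image2 f U U) := by
  rw [crossValue, dif_neg]
  push Not
  exact h

theorem crossValue_comm (h3B : Prop3On f B) (h3C : Prop3On f C) (hb : b ∈ B \ C)
    (hc : c ∈ C \ B) : crossValue (B ∩ C) U f c b = crossValue (B ∩ C) U f b c := by
  by_cases hsep : ∃ a ∈ B ∩ C, f a b ≠ f a c
  · obtain ⟨a, ha, hne⟩ := hsep
    have hcb := crossValue_eq_min (U := U) h3C h3B (inter_comm B C ▸ ha) hc hb hne.symm
    rw [inter_comm C B] at hcb
    rw [hcb, crossValue_eq_min h3B h3C ha hb hc hne, min_comm]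
  · push Not at hsep
    rw [crossValue_eq_gapAbove fun a ha => (hsep a ha).symm, crossValue_eq_gapAbove hsep,
      image_congr fun a ha => (hsep a ha).symm]

open Classical in
noncomputable def amalgam (B C : Set V) (f : V → V → M) (u v : V) : M :=
  if u ∈ B \ C ∧ v ∈ C \ B then crossValue (B ∩ C) (B ∪ C) f u v
  else if u ∈ C \ B ∧ v ∈ B \ C then crossValue (B ∩ C) (B ∪ C) f v u
  else f u v

theorem amalgam_symm (hsymm : ∀ u v, f u v = f v u) (u v : V) :
    amalgam B C f u v = amalgam B C f v u := by
  unfold amalgam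
  split_ifs <;> first | rfl | exact hsymm u v | (simp only [mem_sdiff] at *; tauto)

theorem amalgam_of_mem_left {u v : V} (hu : u ∈ B) (hv : v ∈ B) :
    amalgam B C f u v = f u v := by
  unfold amalgam
  split_ifs <;> first | rfl | (simp only [mem_sdiff] at *; tauto)

theorem amalgam_of_mem_right {u v : V} (hu : u ∈ C) (hv : v ∈ C) :
    amalgam B C f u v = f u v := by
  unfold amalgam
  split_ifs <;> first | rfl | (simp only [mem_sdiff] at *; tauto)

theorem amalgam_of_mem_diff (hb : b ∈ B \ C) (hc : c ∈ C \ B) :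
    amalgam B C f b c = crossValue (B ∩ C) (B ∪ C) f b c := by
  unfold amalgam
  split_ifs <;> first | rfl | (simp only [mem_sdiff] at *; tauto)

theorem amalgam_comm (h3B : Prop3On f B) (h3C : Prop3On f C) :
    amalgam C B f = amalgam B C f := by
  ext u v
  unfold amalgam
  rw [inter_comm C B, union_comm C B]
  split_ifs <;> first | rfl | (simp only [mem_sdiff] at *; tauto) | skip
  · next h _ => exact crossValue_comm h3B h3C h.2 h.1
  · next _ h => exact crossValue_comm h3B h3C h.1 h.2

variable [DenselyOrdered M] [NoMaxOrder M] [NoMinOrder M]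

theorem lt_crossValue_of_eq (hB : B.Finite) (hU : U.Finite) (h3B : Prop3On f B)
    (h3C : Prop3On f C) (ha : a ∈ B ∩ C) (hb : b ∈ B \ C) (hc : c ∈ C \ B)
    (heq : f a b = f a c) : f a b < crossValue (B ∩ C) U f b c := by
  by_cases hsep : ∃ a₁ ∈ B ∩ C, f a₁ b ≠ f a₁ c
  · obtain ⟨a₁, ha₁, hne⟩ := hsep
    have haa₁ : a ≠ a₁ := by rintro rfl; exact hne heq
    have hC' := h3C.isosceles ha.2 ha₁.2 hc.1 haa₁ (ne_of_mem_of_not_mem ha.1 hc.2)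
      (ne_of_mem_of_not_mem ha₁.1 hc.2)
    rw [← heq] at hC'
    rw [crossValue_eq_min h3B h3C ha₁ hb hc hne]
    exact lt_min_of_isosceles (h3B.isosceles ha.1 ha₁.1 hb.1 haa₁
      (ne_of_mem_of_not_mem ha.2 hb.2) (ne_of_mem_of_not_mem ha₁.2 hb.2)) hC' hne
  · push Not at hsep
    rw [crossValue_eq_gapAbove hsep]
    exact (gapAbove_spec ((hB.inter_of_left C).image _) (hU.image2 f hU)).1 _
      (mem_image_of_mem _ ha)

theorem crossValue_lt_of_forall_eq (hA : A.Finite) (hU : U.Finite)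
    (h : ∀ a ∈ A, f a b = f a c) {p q : V} (hp : p ∈ U) (hq : q ∈ U)
    (hlt : ∀ a ∈ A, f a b < f p q) : crossValue A U f b c < f p q := by
  rw [crossValue_eq_gapAbove h]
  exact (gapAbove_spec (hA.image _) (hU.image2 f hU)).2 _ (mem_image2_of_mem hp hq)
    (forall_mem_image.2 hlt)

theorem isosceles_crossValue_of_mem_inter (hB : B.Finite) (hU : U.Finite) (h3B : Prop3On f B)
    (h3C : Prop3On f C) (ha : a ∈ B ∩ C) (hb : b ∈ B \ C) (hc : c ∈ C \ B) :
    Isosceles (f a b) (f a c) (crossValue (B ∩ C) U f b c) := by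
  by_cases heq : f a b = f a c
  · exact Or.inl ⟨heq, lt_crossValue_of_eq hB hU h3B h3C ha hb hc heq⟩
  · rw [crossValue_eq_min h3B h3C ha hb hc heq]
    exact isosceles_min_of_ne heq

theorem isosceles_crossValue_of_separates (hB : B.Finite) (hU : U.Finite) (h3B : Prop3On f B)
    (h3C : Prop3On f C) {b' : V} (ha : a ∈ B ∩ C) (hb : b ∈ B \ C) (hb' : b' ∈ B \ C)
    (hbb' : b ≠ b') (hc : c ∈ C \ B) (hne : f a b ≠ f a c) :
    Isosceles (f b b') (crossValue (B ∩ C) U f b c) (crossValue (B ∩ C) U f b' c) := by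
  have hB' := h3B.isosceles ha.1 hb.1 hb'.1 (ne_of_mem_of_not_mem ha.2 hb.2)
    (ne_of_mem_of_not_mem ha.2 hb'.2) hbb'
  rw [crossValue_eq_min h3B h3C ha hb hc hne]
  by_cases heq : f a b' = f a c
  · rw [← heq] at hne ⊢
    exact isosceles_min_of_lt hB' hne (lt_crossValue_of_eq hB hU h3B h3C ha hb' hc heq)
  · rw [crossValue_eq_min h3B h3C ha hb' hc heq]
    exact isosceles_min_min hB' hne heq

theorem isosceles_crossValue_of_forall_eq (hB : B.Finite) (hC : C.Finite) (h3B : Prop3On f B)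
    {b' : V} (hb : b ∈ B \ C) (hb' : b' ∈ B \ C) (hbb' : b ≠ b')
    (h : ∀ a ∈ B ∩ C, f a b = f a c) (h' : ∀ a ∈ B ∩ C, f a b' = f a c) :
    Isosceles (f b b') (crossValue (B ∩ C) (B ∪ C) f b c)
      (crossValue (B ∩ C) (B ∪ C) f b' c) := by
  have hprofile : ∀ a ∈ B ∩ C, f a b = f a b' := fun a ha => (h a ha).trans (h' a ha).symm
  have hcross : crossValue (B ∩ C) (B ∪ C) f b c = crossValue (B ∩ C) (B ∪ C) f b' c := by
    rw [crossValue_eq_gapAbove h, crossValue_eq_gapAbove h', image_congr hprofile]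
  have hlt : crossValue (B ∩ C) (B ∪ C) f b c < f b b' :=
    crossValue_lt_of_forall_eq (hB.inter_of_left C) (hB.union hC) h (Or.inl hb.1) (Or.inl hb'.1)
      fun a ha => (h3B.isosceles ha.1 hb.1 hb'.1 (ne_of_mem_of_not_mem ha.2 hb.2)
        (ne_of_mem_of_not_mem ha.2 hb'.2) hbb').lt_of_eq (hprofile a ha)
  exact Or.inr (Or.inr ⟨hcross, hcross ▸ hlt⟩)

theorem isosceles_crossValue_crossValue (hB : B.Finite) (hC : C.Finite)
    (hsymm : ∀ u v, f u v = f v u) (h3B : Prop3On f B) (h3C : Prop3On f C) {b' : V}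
    (hb : b ∈ B \ C) (hb' : b' ∈ B \ C) (hbb' : b ≠ b') (hc : c ∈ C \ B) :
    Isosceles (f b b') (crossValue (B ∩ C) (B ∪ C) f b c)
      (crossValue (B ∩ C) (B ∪ C) f b' c) := by
  have hU := hB.union hC
  by_cases hsep : ∃ a ∈ B ∩ C, f a b ≠ f a c ∨ f a b' ≠ f a c
  · obtain ⟨a, ha, hne | hne⟩ := hsep
    · exact isosceles_crossValue_of_separates hB hU h3B h3C ha hb hb' hbb' hc hne
    · have h := isosceles_crossValue_of_separates hB hU h3B h3C ha hb' hb hbb'.symm hc hne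
      rw [hsymm b' b] at h
      exact h.swap_right
  · push Not at hsep
    exact isosceles_crossValue_of_forall_eq hB hC h3B hb hb' hbb' (fun a ha => (hsep a ha).1)
      fun a ha => (hsep a ha).2

theorem isosceles_amalgam_of_mem_diff (hB : B.Finite) (hC : C.Finite)
    (hsymm : ∀ u v, f u v = f v u) (h3B : Prop3On f B) (h3C : Prop3On f C) {x y z : V}
    (hx : x ∈ B) (hy : y ∈ B) (hz : z ∈ C \ B) (hxy : x ≠ y) :
    Isosceles (amalgam B C f x y) (amalgam B C f x z) (amalgam B C f y z) := by
  have hU := hB.union hC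
  rw [amalgam_of_mem_left hx hy]
  by_cases hxC : x ∈ C <;> by_cases hyC : y ∈ C
  · rw [amalgam_of_mem_right hxC hz.1, amalgam_of_mem_right hyC hz.1]
    exact h3C.isosceles hxC hyC hz.1 hxy (ne_of_mem_of_not_mem hx hz.2)
      (ne_of_mem_of_not_mem hy hz.2)
  · rw [amalgam_of_mem_right hxC hz.1, amalgam_of_mem_diff ⟨hy, hyC⟩ hz]
    exact isosceles_crossValue_of_mem_inter hB hU h3B h3C ⟨hx, hxC⟩ ⟨hy, hyC⟩ hz
  · rw [amalgam_of_mem_diff ⟨hx, hxC⟩ hz, amalgam_of_mem_right hyC hz.1, hsymm x y]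
    exact
      (isosceles_crossValue_of_mem_inter hB hU h3B h3C ⟨hy, hyC⟩ ⟨hx, hxC⟩ hz).swap_right
  · rw [amalgam_of_mem_diff ⟨hx, hxC⟩ hz, amalgam_of_mem_diff ⟨hy, hyC⟩ hz]
    exact isosceles_crossValue_crossValue hB hC hsymm h3B h3C ⟨hx, hxC⟩ ⟨hy, hyC⟩ hxy hz

theorem isosceles_amalgam (hB : B.Finite) (hC : C.Finite) (hsymm : ∀ u v, f u v = f v u)
    (h3B : Prop3On f B) (h3C : Prop3On f C) {x y z : V} (hx : x ∈ B) (hy : y ∈ B)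
    (hz : z ∈ B ∪ C) (hxy : x ≠ y) (hxz : x ≠ z) (hyz : y ≠ z) :
    Isosceles (amalgam B C f x y) (amalgam B C f x z) (amalgam B C f y z) := by
  by_cases hzB : z ∈ B
  · rw [amalgam_of_mem_left hx hy, amalgam_of_mem_left hx hzB, amalgam_of_mem_left hy hzB]
    exact h3B.isosceles hx hy hzB hxy hxz hyz
  · exact isosceles_amalgam_of_mem_diff hB hC hsymm h3B h3C hx hy
      ⟨hz.resolve_left hzB, hzB⟩ hxy

theorem prop3On_amalgam (hB : B.Finite) (hC : C.Finite) (hsymm : ∀ u v, f u v = f v u)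
    (h3B : Prop3On f B) (h3C : Prop3On f C) : Prop3On (amalgam B C f) (B ∪ C) := by
  set g := amalgam B C f
  have hg : ∀ u v, g u v = g v u := amalgam_symm hsymm
  have hpair : ∀ {x y z : V}, x ∈ B ∧ y ∈ B ∨ x ∈ C ∧ y ∈ C → z ∈ B ∪ C → x ≠ y → x ≠ z →
      y ≠ z → Isosceles (g x y) (g x z) (g y z) := by
    rintro x y z (⟨hx, hy⟩ | ⟨hx, hy⟩) hz
    · exact isosceles_amalgam hB hC hsymm h3B h3C hx hy hz
    · rw [show g = amalgam C B f from (amalgam_comm h3B h3C).symm]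
      exact isosceles_amalgam hC hB hsymm h3C h3B hx hy (union_comm B C ▸ hz)
  rw [prop3On_iff]
  intro x hx y hy z hz hxy hxz hyz
  have hsides : (x ∈ B ∧ y ∈ B ∨ x ∈ C ∧ y ∈ C) ∨ (x ∈ B ∧ z ∈ B ∨ x ∈ C ∧ z ∈ C) ∨
      (y ∈ B ∧ z ∈ B ∨ y ∈ C ∧ z ∈ C) := by
    rw [mem_union] at hx hy hz
    tauto
  rcases hsides with hxy' | hxz' | hyz'
  · exact hpair hxy' hz hxy hxz hyz
  · have h := hpair hxz' hy hxz hxy hyz.symm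
    rw [hg z y] at h
    exact h.swap_left
  · have h := hpair hyz' hx hyz hxy.symm hxz.symm
    rw [hg y x, hg z x] at h
    exact h.rotate

end Amalgamation

theorem stmt8_general {V M : Type*} [LinearOrder M] [Nonempty M]
    [DenselyOrdered M] [NoMaxOrder M] [NoMinOrder M]
    (B C : Set V) (hB : B.Finite) (hC : C.Finite)
    (f : V → V → M) (hsymm : ∀ a b : V, f a b = f b a)
    (h3B : Prop3On f B) (h3C : Prop3On f C) :
    ∃ g : V → V → M,
      (∀ a b : V, g a b = g b a) ∧
      (∀ a ∈ B, ∀ b ∈ B, g a b = f a b) ∧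
      (∀ a ∈ C, ∀ b ∈ C, g a b = f a b) ∧
      Prop3On g (B ∪ C) :=
  ⟨amalgam B C f, amalgam_symm hsymm, fun _ ha _ hb => amalgam_of_mem_left ha hb,
    fun _ ha _ hb => amalgam_of_mem_right ha hb, prop3On_amalgam hB hC hsymm h3B h3C⟩

/-- Joint embedding (amalgamation over `A = B ∩ C`) for the class `K`: if a coloring
over a countable dense linear order `M` without endpoints satisfies property (3) on
each of the finite vertex sets `B` and `C`, then it can be modified off `B` and `C`
so that property (3) holds on all of `B ∪ C`. -/
theorem stmt8 {V M : Type*} [LinearOrder M] [Countable M] [Nonempty M]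
    [DenselyOrdered M] [NoMaxOrder M] [NoMinOrder M]
    (B C : Set V) (hB : B.Finite) (hC : C.Finite)
    (f : V → V → M) (hsymm : ∀ a b : V, f a b = f b a)
    (h3B : Prop3On f B) (h3C : Prop3On f C) :
    ∃ g : V → V → M,
      (∀ a b : V, g a b = g b a) ∧
      (∀ a ∈ B, ∀ b ∈ B, g a b = f a b) ∧
      (∀ a ∈ C, ∀ b ∈ C, g a b = f a b) ∧
      Prop3On g (B ∪ C) :=
  stmt8_general B C hB hC f hsymm h3B h3C
end

section
/- Let V be a set with coloring f : [V]² → M satisfying property (3), and let A ⊆ V be finite. Suppose b is a new vertex with colors f{b,a} ∈ M defined for a ∈ A such that A ∪ {b} satisfies property (3). Define V₀ = A and V_{n+1} = {v ∈ V : ∃a ∈ V_n, f{a,b} ≠ f{a,v}}, and for v ∈ V_{n+1} set f{b,v} = min(f{a,v}, f{a,b}) for any witnessing a. Then this assignment is well-defined (independent of the witness a) and property (3) holds on V_ω ∪ {b} where V_ω = ⋃_n V_n. -/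
section MinAttainedTwice

variable {M : Type*} [LinearOrder M]

def MinAttainedTwice (x y z : M) : Prop :=
  (x = y ∧ x < z) ∨ (x = z ∧ x < y) ∨ (y = z ∧ y < x)

theorem minAttainedTwice_iff {x y z : M} :
    MinAttainedTwice x y z ↔ (x ≠ y → z = min x y) ∧ (x = y → x < z) := by
  unfold MinAttainedTwice
  grind

theorem MinAttainedTwice.swap {x y z : M} (h : MinAttainedTwice x y z) :
    MinAttainedTwice y x z := by
  unfold MinAttainedTwice at *
  grind

theorem MinAttainedTwice.eq_min {x y z : M} (h : MinAttainedTwice x y z) (hxz : x ≠ z) :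
    y = min z x := by
  unfold MinAttainedTwice at h
  grind

end MinAttainedTwice

section Forcing

variable {V M : Type*} (f : V → V → M)

def forcedBy (S : Set V) (h : V → M) : Set V :=
  {v | ∃ a ∈ S, a ≠ v ∧ h a ≠ f a v}

def forcedSeq (A : Set V) (h : V → M) : ℕ → Set V
  | 0 => A
  | n + 1 => forcedBy f (forcedSeq A h n) h

variable {f}

theorem forcedBy_congr {S : Set V} {h h' : V → M} (hh : Set.EqOn h h' S) :
    forcedBy f S h = forcedBy f S h' := by
  ext v
  refine exists_congr fun a => and_congr_right fun ha => ?_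
  rw [hh ha]

theorem forcedBy_mono {S T : Set V} (hST : S ⊆ T) (h : V → M) :
    forcedBy f S h ⊆ forcedBy f T h :=
  fun _ ⟨a, ha, hav, hne⟩ => ⟨a, hST ha, hav, hne⟩

end Forcing

section Extension

variable {V M : Type*} [LinearOrder M] (f : V → V → M)

def Compatible (S : Set V) (h : V → M) : Prop :=
  ∀ x ∈ S, ∀ y ∈ S, x ≠ y → MinAttainedTwice (h x) (h y) (f x y)

variable {f}

theorem Prop3On.minAttainedTwice (h3 : Prop3On f Set.univ) (hsymm : ∀ a b : V, f a b = f b a)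
    {a c v : V} (hac : a ≠ c) (hav : a ≠ v) (hcv : c ≠ v) :
    MinAttainedTwice (f a v) (f c v) (f a c) := by
  rw [hsymm a v, hsymm c v]
  exact minAttainedTwice_iff.2 (h3 v trivial a trivial c trivial hav.symm hcv.symm hac)

namespace Compatible

variable {S T : Set V} {h h' : V → M}

theorem mono (hS : Compatible f S h) (hTS : T ⊆ S) : Compatible f T h :=
  fun x hx y hy => hS x (hTS hx) y (hTS hy)

theorem congr (hS : Compatible f S h) (hh : Set.EqOn h h' S) : Compatible f S h' := by
  intro x hx y hy hxy
  rw [← hh hx, ← hh hy]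
  exact hS x hx y hy hxy

theorem eq_min_of_forces (hS : Compatible f S h) {a v : V} (ha : a ∈ S) (hv : v ∈ S)
    (hav : a ≠ v) (hne : h a ≠ f a v) : h v = min (f a v) (h a) :=
  (hS a ha v hv hav).eq_min hne

theorem insert_of_forall (hsymm : ∀ a b : V, f a b = f b a) (hS : Compatible f S h) {v : V}
    (hv : ∀ c ∈ S, c ≠ v → MinAttainedTwice (h c) (h v) (f c v)) :
    Compatible f (insert v S) h := by
  rintro x (rfl | hx) y (rfl | hy) hxy
  · exact absurd rfl hxy
  · simpa only [hsymm y x] using (hv y hy hxy.symm).swap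
  · exact hv x hx hxy
  · exact hS x hx y hy hxy

theorem insert_forced (hsymm : ∀ a b : V, f a b = f b a) (h3 : Prop3On f Set.univ)
    (hS : Compatible f S h) {a v : V} (ha : a ∈ S) (hvS : v ∉ S) (hne : h a ≠ f a v)
    (hval : h v = min (f a v) (h a)) : Compatible f (insert v S) h := by
  refine hS.insert_of_forall hsymm fun c hc hcv => ?_
  have hav : a ≠ v := fun hav => hvS (hav ▸ ha)
  by_cases hca : c = a
  · subst hca
    unfold MinAttainedTwice
    grind
  · have hbase := hS a ha c hc (Ne.symm hca)
    have hside := h3.minAttainedTwice hsymm (Ne.symm hca) hav hcv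
    unfold MinAttainedTwice at *
    grind

theorem exists_forces_both (hsymm : ∀ a b : V, f a b = f b a) (h3 : Prop3On f Set.univ)
    (hS : Compatible f S h) {x y : V} (hxS : x ∉ S) (hyS : y ∉ S)
    (hx : x ∈ forcedBy f S h) (hy : y ∈ forcedBy f S h) :
    ∃ a ∈ S, h a ≠ f a x ∧ h a ≠ f a y := by
  obtain ⟨a, ha, hax, hnex⟩ := hx
  obtain ⟨a', ha', ha'y, hney⟩ := hy
  by_cases hay : h a = f a y
  · by_cases ha'x : h a' = f a' x
    · have haa' : a ≠ a' := by rintro rfl; exact hney hay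
      have hay' : a ≠ y := fun e => hyS (e ▸ ha)
      have ha'x' : a' ≠ x := fun e => hxS (e ▸ ha')
      have hbase := hS a ha a' ha' haa'
      have hxside := h3.minAttainedTwice hsymm haa' hax ha'x'
      have hyside := h3.minAttainedTwice hsymm haa' hay' ha'y
      unfold MinAttainedTwice at *
      grind
    · exact ⟨a', ha', ha'x, hney⟩
  · exact ⟨a, ha, hnex, hay⟩

theorem union_forcedBy (hsymm : ∀ a b : V, f a b = f b a) (h3 : Prop3On f Set.univ)
    (hS : Compatible f S h) (hh : Set.EqOn h' h S)
    (hnew : ∀ v ∈ forcedBy f S h, v ∉ S → ∃ a ∈ S, h a ≠ f a v ∧ h' v = min (f a v) (h a)) :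
    Compatible f (S ∪ forcedBy f S h) h' := by
  have hS' : Compatible f S h' := hS.congr hh.symm
  have hone : ∀ v ∈ S ∪ forcedBy f S h, Compatible f (insert v S) h' := by
    intro v hv
    by_cases hvS : v ∈ S
    · rwa [Set.insert_eq_of_mem hvS]
    obtain ⟨a, ha, hne, hval⟩ := hnew v (hv.resolve_left hvS) hvS
    rw [← hh ha] at hne hval
    exact hS'.insert_forced hsymm h3 ha hvS hne hval
  intro x hx y hy hxy
  by_cases hxS : x ∈ S
  · exact hone y hy x (Or.inr hxS) y (Or.inl rfl) hxy
  by_cases hyS : y ∈ S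
  · exact hone x hx x (Or.inl rfl) y (Or.inr hyS) hxy
  have hxf : x ∈ forcedBy f S h := hx.resolve_left hxS
  have hyf : y ∈ forcedBy f S h := hy.resolve_left hyS
  obtain ⟨a, ha, hnex, hney⟩ := hS.exists_forces_both hsymm h3 hxS hyS hxf hyf
  have hax : a ≠ x := fun e => hxS (e ▸ ha)
  have hay : a ≠ y := fun e => hyS (e ▸ ha)
  rw [← hh ha] at hnex hney
  have hxval := (hone x hx).eq_min_of_forces (Or.inr ha) (Or.inl rfl) hax hnex
  have hyval := (hone y hy).eq_min_of_forces (Or.inr ha) (Or.inl rfl) hay hney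
  have hside := h3.minAttainedTwice hsymm hxy (Ne.symm hax) (Ne.symm hay)
  rw [hsymm x a, hsymm y a] at hside
  rw [hxval, hyval]
  unfold MinAttainedTwice at *
  grind

end Compatible

variable (f)

open Classical in
noncomputable def extendStep (p : Set V × (V → M)) : Set V × (V → M) :=
  (p.1 ∪ forcedBy f p.1 p.2, fun v =>
    if hv : v ∉ p.1 ∧ ∃ a ∈ p.1, a ≠ v ∧ p.2 a ≠ f a v then
      min (f hv.2.choose v) (p.2 hv.2.choose)
    else p.2 v)

noncomputable def extendSeq (A : Set V) (g : V → M) (n : ℕ) : Set V × (V → M) :=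
  (extendStep f)^[n] (A, g)

open Classical in
noncomputable def extendLimit (A : Set V) (g : V → M) (v : V) : M :=
  if hv : ∃ n, v ∈ (extendSeq f A g n).1 then (extendSeq f A g (Nat.find hv)).2 v else g v

variable {f}

theorem extendStep_eqOn (p : Set V × (V → M)) : Set.EqOn (extendStep f p).2 p.2 p.1 := by
  intro v hv
  simp only [extendStep, hv, not_true_eq_false, false_and, dite_false]

theorem Compatible.extendStep (hsymm : ∀ a b : V, f a b = f b a) (h3 : Prop3On f Set.univ)
    {p : Set V × (V → M)} (hp : Compatible f p.1 p.2) :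
    Compatible f (extendStep f p).1 (extendStep f p).2 := by
  refine hp.union_forcedBy hsymm h3 (extendStep_eqOn p) fun v hv hvS => ?_
  have hw : v ∉ p.1 ∧ ∃ a ∈ p.1, a ≠ v ∧ p.2 a ≠ f a v := ⟨hvS, hv⟩
  obtain ⟨ha, -, hne⟩ := hw.2.choose_spec
  exact ⟨hw.2.choose, ha, hne, dif_pos hw⟩

theorem extendSeq_succ (A : Set V) (g : V → M) (n : ℕ) :
    extendSeq f A g (n + 1) = extendStep f (extendSeq f A g n) :=
  Function.iterate_succ_apply' _ _ _

theorem monotone_extendSeq_fst (A : Set V) (g : V → M) :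
    Monotone fun n => (extendSeq f A g n).1 :=
  monotone_nat_of_le_succ fun n => by
    rw [extendSeq_succ]
    exact Set.subset_union_left

theorem extendSeq_snd_eqOn (A : Set V) (g : V → M) {n m : ℕ} (hnm : n ≤ m) :
    Set.EqOn (extendSeq f A g m).2 (extendSeq f A g n).2 (extendSeq f A g n).1 := by
  induction m, hnm using Nat.le_induction with
  | base => exact Set.eqOn_refl _ _
  | succ m hnm ih =>
    intro v hv
    rw [extendSeq_succ, extendStep_eqOn _ (monotone_extendSeq_fst A g hnm hv), ih hv]

theorem extendLimit_eq {A : Set V} {g : V → M} {n : ℕ} {v : V}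
    (hv : v ∈ (extendSeq f A g n).1) : extendLimit f A g v = (extendSeq f A g n).2 v := by
  classical
  have hex : ∃ k, v ∈ (extendSeq f A g k).1 := ⟨n, hv⟩
  rw [extendLimit, dif_pos hex]
  exact (extendSeq_snd_eqOn A g (Nat.find_min' hex hv) (Nat.find_spec hex)).symm

theorem Compatible.iUnion_extendSeq (hsymm : ∀ a b : V, f a b = f b a)
    (h3 : Prop3On f Set.univ) {A : Set V} {g : V → M} (hA : Compatible f A g) :
    Compatible f (⋃ n, (extendSeq f A g n).1) (extendLimit f A g) := by
  have hseq : ∀ n, Compatible f (extendSeq f A g n).1 (extendSeq f A g n).2 := by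
    intro n
    induction n with
    | zero => exact hA
    | succ n ih => rw [extendSeq_succ]; exact ih.extendStep hsymm h3
  intro x hx y hy hxy
  obtain ⟨n, hxn⟩ := Set.mem_iUnion.1 hx
  obtain ⟨m, hym⟩ := Set.mem_iUnion.1 hy
  have hxk := monotone_extendSeq_fst A g (le_max_left n m) hxn
  have hyk := monotone_extendSeq_fst A g (le_max_right n m) hym
  rw [extendLimit_eq hxk, extendLimit_eq hyk]
  exact hseq _ x hxk y hyk hxy

theorem forcedSeq_extendLimit_subset (A : Set V) (g : V → M) (n : ℕ) :
    forcedSeq f A (extendLimit f A g) n ⊆ (extendSeq f A g n).1 := by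
  induction n with
  | zero => exact subset_rfl
  | succ n ih =>
    have hagree : Set.EqOn (extendLimit f A g) (extendSeq f A g n).2 (extendSeq f A g n).1 :=
      fun v hv => extendLimit_eq hv
    calc forcedSeq f A (extendLimit f A g) (n + 1)
        ⊆ forcedBy f (extendSeq f A g n).1 (extendLimit f A g) := forcedBy_mono ih _
      _ = forcedBy f (extendSeq f A g n).1 (extendSeq f A g n).2 := forcedBy_congr hagree
      _ ⊆ (extendSeq f A g (n + 1)).1 := by
        rw [extendSeq_succ]
        exact Set.subset_union_right

end Extension

theorem stmt9_general {V M : Type*} [LinearOrder M]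
    (f : V → V → M) (hsymm : ∀ a b : V, f a b = f b a)
    (h3 : Prop3On f Set.univ)
    (A : Set V) (g : V → M)
    -- property (3) holds on `A` together with the new vertex `b`
    (h3b : ∀ a₁ ∈ A, ∀ a₂ ∈ A, a₁ ≠ a₂ →
      (g a₁ ≠ g a₂ → f a₁ a₂ = min (g a₁) (g a₂)) ∧
      (g a₁ = g a₂ → g a₁ < f a₁ a₂)) :
    ∃ (h : V → M) (Vseq : ℕ → Set V),
      Vseq 0 = A ∧
      (∀ n, Vseq (n + 1) = {v : V | ∃ a ∈ Vseq n, a ≠ v ∧ h a ≠ f a v}) ∧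
      (∀ a ∈ A, h a = g a) ∧
      -- the assignment is independent of the chosen witness
      (∀ n, ∀ v ∈ Vseq (n + 1), ∀ a ∈ Vseq n, a ≠ v → h a ≠ f a v →
        h v = min (f a v) (h a)) ∧
      -- property (3) holds on `V_ω ∪ {b}`
      (∀ a₁ ∈ ⋃ n, Vseq n, ∀ a₂ ∈ ⋃ n, Vseq n, a₁ ≠ a₂ →
        (h a₁ ≠ h a₂ → f a₁ a₂ = min (h a₁) (h a₂)) ∧
        (h a₁ = h a₂ → h a₁ < f a₁ a₂)) := by
  have hA : Compatible f A g := fun x hx y hy hxy => minAttainedTwice_iff.2 (h3b x hx y hy hxy)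
  set h := extendLimit f A g
  have hω : Compatible f (⋃ n, forcedSeq f A h n) h :=
    (hA.iUnion_extendSeq hsymm h3).mono <| Set.iUnion_mono fun n =>
      forcedSeq_extendLimit_subset A g n
  refine ⟨h, forcedSeq f A h, rfl, fun n => rfl, fun a ha => extendLimit_eq (n := 0) ha,
    fun n v hv a ha hav hne => ?_, fun x hx y hy hxy => minAttainedTwice_iff.1 (hω x hx y hy hxy)⟩
  exact hω.eq_min_of_forces (Set.mem_iUnion_of_mem n ha) (Set.mem_iUnion_of_mem (n + 1) hv) hav hne

/-- Extending the coloring to a new vertex `b` over the determined part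
`V_ω = ⋃_n V_n`: given colors `g a` of the edges `{b,a}` for `a` in a finite set `A`
such that property (3) holds on `A ∪ {b}`, there is an extension `h` of `g`
(where `h v` is the color of `{b, v}`), together with the sets
`V₀ = A`, `V_{n+1} = {v : ∃ a ∈ V_n, h a ≠ f a v}`, such that the inductive
assignment `h v = min (f a v) (h a)` holds for EVERY witness `a` (well-definedness)
and property (3) holds on `V_ω ∪ {b}`. -/
theorem stmt9 {V M : Type*} [LinearOrder M]
    (f : V → V → M) (hsymm : ∀ a b : V, f a b = f b a)
    (h3 : Prop3On f Set.univ)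
    (A : Set V) (hA : A.Finite) (g : V → M)
    -- property (3) holds on `A` together with the new vertex `b`
    (h3b : ∀ a₁ ∈ A, ∀ a₂ ∈ A, a₁ ≠ a₂ →
      (g a₁ ≠ g a₂ → f a₁ a₂ = min (g a₁) (g a₂)) ∧
      (g a₁ = g a₂ → g a₁ < f a₁ a₂)) :
    ∃ (h : V → M) (Vseq : ℕ → Set V),
      Vseq 0 = A ∧
      (∀ n, Vseq (n + 1) = {v : V | ∃ a ∈ Vseq n, a ≠ v ∧ h a ≠ f a v}) ∧
      (∀ a ∈ A, h a = g a) ∧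
      -- the assignment is independent of the chosen witness
      (∀ n, ∀ v ∈ Vseq (n + 1), ∀ a ∈ Vseq n, a ≠ v → h a ≠ f a v →
        h v = min (f a v) (h a)) ∧
      -- property (3) holds on `V_ω ∪ {b}`
      (∀ a₁ ∈ ⋃ n, Vseq n, ∀ a₂ ∈ ⋃ n, Vseq n, a₁ ≠ a₂ →
        (h a₁ ≠ h a₂ → f a₁ a₂ = min (h a₁) (h a₂)) ∧
        (h a₁ = h a₂ → h a₁ < f a₁ a₂)) :=
  stmt9_general f hsymm h3 A g h3b
end

section
/- In the setting of the previous lemma, let W = V \ V_ω = {w ∈ V : ∀a ∈ V_ω, f{a,b} = f{a,w}}. If a value f{b,w} is assigned with f{b,w} > f{b,a} for all a ∈ V₀ = A, then automatically f{b,w} > f{b,a} for all a ∈ V_ω. -/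
theorem forall_mem_iUnion_lt_of_le_pred {V M : Type*} [Preorder M] (h : V → M)
    (S : ℕ → Set V) (hle : ∀ n, ∀ v ∈ S (n + 1), ∃ a ∈ S n, h v ≤ h a)
    {m : M} (hm : ∀ a ∈ S 0, h a < m) : ∀ a ∈ ⋃ n, S n, h a < m := by
  simp only [Set.mem_iUnion, forall_exists_index]
  intro a n ha
  induction n generalizing a with
  | zero => exact hm a ha
  | succ n ih =>
    obtain ⟨x, hx, hax⟩ := hle n a ha
    exact hax.trans_lt (ih x hx)

theorem stmt10_general {V M : Type*} [LinearOrder M]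
    (f : V → V → M) (h : V → M) (Vseq : ℕ → Set V)
    (hstep : ∀ n, Vseq (n + 1) = {v : V | ∃ a ∈ Vseq n, a ≠ v ∧ h a ≠ f a v})
    -- the inductive rule defining the colors of edges from `b` into `V_ω`
    (hrule : ∀ n, ∀ v ∈ Vseq (n + 1), ∀ a ∈ Vseq n, a ≠ v → h a ≠ f a v →
      h v = min (f a v) (h a)) :
    ∀ m : M, (∀ a ∈ Vseq 0, h a < m) → ∀ a ∈ ⋃ n, Vseq n, h a < m := by
  refine fun m hm => forall_mem_iUnion_lt_of_le_pred h Vseq (fun n v hv => ?_) hm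
  obtain ⟨a, ha, hav, hfa⟩ : ∃ a ∈ Vseq n, a ≠ v ∧ h a ≠ f a v := by
    simpa only [hstep n, Set.mem_ofPred_eq] using hv
  exact ⟨a, ha, (hrule n v hv a ha hav hfa).trans_le (min_le_right _ _)⟩

/-- In the extension step, if the new color `f{b,w} = m` is chosen above `f{b,a}`
for all `a ∈ V₀ = A`, then automatically `m > f{b,a}` for all `a ∈ V_ω`.
Here `h a` denotes the color `f{b,a}` of the edge from the new vertex `b` to `a`. -/
theorem stmt10 {V M : Type*} [LinearOrder M]
    (f : V → V → M) (hsymm : ∀ a b : V, f a b = f b a)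
    (h3 : Prop3On f Set.univ)
    (A : Set V) (hA : A.Finite) (h : V → M) (Vseq : ℕ → Set V)
    (h0 : Vseq 0 = A)
    (hstep : ∀ n, Vseq (n + 1) = {v : V | ∃ a ∈ Vseq n, a ≠ v ∧ h a ≠ f a v})
    -- the inductive rule defining the colors of edges from `b` into `V_ω`
    (hrule : ∀ n, ∀ v ∈ Vseq (n + 1), ∀ a ∈ Vseq n, a ≠ v → h a ≠ f a v →
      h v = min (f a v) (h a)) :
    ∀ m : M, (∀ a ∈ Vseq 0, h a < m) → ∀ a ∈ ⋃ n, Vseq n, h a < m :=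
  stmt10_general f h Vseq hstep hrule
end

section
/- Erdős–Rado for triangles: for any infinite cardinal λ and any coloring c : [X]² → λ of pairs from a set X with |X| ≥ (2^λ)⁺, there exist three distinct elements a, b, c ∈ X with all three pairs receiving the same color. -/
/-!
Fix a well-order `W` of type `λ⁺`. A colour pattern `t` on an initial segment `Iio w` determines
greedily a sequence `(x_v)_{v ≤ w}`: each `x_v` is some point outside the earlier ones whose
colour towards each earlier `x_u` is `t u`. There are at most `2^λ` pairs `(w, t)`, so some `a`
is never produced. The greedy construction driven by the colours towards `a` then never gets
stuck (`a` itself is always a candidate) and yields `λ⁺` points with `c x_u x_v = c x_u a` for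
`u < v`. By pigeonhole two of them, `x_u` and `x_v`, have the same colour towards `a`, and
`{x_u, x_v, a}` is monochromatic.
-/

open Cardinal Set

universe u

namespace ErdosRadoTriangle

variable {X : Type*} {C : Type u} [Nonempty X] (c : X → X → C)

noncomputable def realizer {ι : Type*} (f : ι → X) (t : ι → C) : X :=
  Classical.epsilon fun y => y ∉ range f ∧ ∀ i, c (f i) y = t i

theorem realizer_spec {ι : Type*} {f : ι → X} {t : ι → C}
    (h : ∃ y, y ∉ range f ∧ ∀ i, c (f i) y = t i) :
    realizer c f t ∉ range f ∧ ∀ i, c (f i) (realizer c f t) = t i :=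
  Classical.epsilon_spec h

variable {W : Type u} [LinearOrder W]

attribute [local instance] WellFoundedLT.toWellFoundedRelation

noncomputable def canonicalSeq [WellFoundedLT W] (w : W) (t : Iio w → C) : X :=
  realizer c (fun v : Iio w => canonicalSeq v.1 fun u : Iio v.1 => t ⟨u, u.2.trans v.2⟩) t
termination_by w
decreasing_by exact v.2

noncomputable def seqTowards [WellFoundedLT W] (a : X) (w : W) : X :=
  canonicalSeq c w fun v => c (seqTowards a v) a
termination_by w
decreasing_by exact v.2

theorem seqTowards_eq [WellFoundedLT W] (a : X) (w : W) :
    seqTowards c a w =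
      realizer c (fun v : Iio w => seqTowards c a v.1) (fun v => c (seqTowards c a v.1) a) := by
  rw [seqTowards, canonicalSeq]
  congr 1
  funext v
  rw [seqTowards]

theorem seqTowards_spec [WellFoundedLT W] {a : X} {v w : W}
    (ha : ∀ u < w, seqTowards c a u ≠ a) (hvw : v < w) :
    seqTowards c a v ≠ seqTowards c a w ∧
      c (seqTowards c a v) (seqTowards c a w) = c (seqTowards c a v) a := by
  have h := realizer_spec c (f := fun u : Iio w => seqTowards c a u.1)
    (t := fun u => c (seqTowards c a u.1) a) ⟨a, fun ⟨u, hu⟩ => ha u u.2 hu, fun _ => rfl⟩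
  rw [← seqTowards_eq] at h
  exact ⟨fun hvw' => h.1 ⟨⟨v, hvw⟩, hvw'⟩, h.2 ⟨v, hvw⟩⟩

theorem exists_triangle_of_notMem_range_canonicalSeq [WellFoundedLT W] (hCW : #C < #W) {a : X}
    (ha : a ∉ range fun p : Σ w : W, (Iio w → C) => canonicalSeq c p.1 p.2) :
    ∃ x y z : X, x ≠ y ∧ x ≠ z ∧ y ≠ z ∧ c x y = c y z ∧ c x y = c x z := by
  have hne (w : W) : seqTowards c a w ≠ a := fun h =>
    ha ⟨⟨w, fun v => c (seqTowards c a v.1) a⟩, (seqTowards.eq_1 c a w).symm.trans h⟩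
  obtain ⟨v, w, hcol, hvw⟩ :
      ∃ v w : W, c (seqTowards c a v) a = c (seqTowards c a w) a ∧ v < w := by
    obtain ⟨v, w, hcol, hvw⟩ := Function.not_injective_iff.mp fun hinj =>
      (mk_le_of_injective (f := fun w : W => c (seqTowards c a w) a) hinj).not_gt hCW
    rcases hvw.lt_or_gt with h | h
    exacts [⟨v, w, hcol, h⟩, ⟨w, v, hcol.symm, h⟩]
  obtain ⟨hvw', hcol'⟩ := seqTowards_spec c (fun u _ => hne u) hvw
  exact ⟨_, _, a, hvw', hne v, hne w, hcol'.trans hcol, hcol'⟩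

theorem mk_sigma_Iio_arrow_le {W : Type u} [Preorder W] {lam : Cardinal.{u}} (hlam : ℵ₀ ≤ lam)
    (hW : #W ≤ 2 ^ lam) (hIio : ∀ w : W, #(Iio w) ≤ lam) (hC : #C ≤ lam) :
    #(Σ w : W, (Iio w → C)) ≤ 2 ^ lam := by
  have hpow (w : W) : #C ^ #(Iio w) ≤ 2 ^ lam :=
    calc #C ^ #(Iio w) ≤ lam ^ #(Iio w) := power_le_power_right hC
      _ ≤ lam ^ lam := power_le_power_left (aleph0_pos.trans_le hlam).ne' (hIio w)
      _ = 2 ^ lam := power_self_eq hlam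
  calc #(Σ w : W, (Iio w → C)) = sum fun w : W => #C ^ #(Iio w) := by
        simp only [mk_sigma, mk_arrow, lift_id]
    _ ≤ #W * ⨆ w : W, #C ^ #(Iio w) := sum_le_mk_mul_iSup _
    _ ≤ 2 ^ lam * 2 ^ lam := mul_le_mul' hW (ciSup_le' hpow)
    _ = 2 ^ lam := mul_eq_self (hlam.trans (cantor lam).le)

end ErdosRadoTriangle

theorem stmt16_general {X C : Type u} (lam : Cardinal.{u}) (hlam : Cardinal.aleph0 ≤ lam)
    (hC : Cardinal.mk C ≤ lam)
    (hX : Order.succ (2 ^ lam) ≤ Cardinal.mk X)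
    (c : X → X → C) :
    ∃ a b d : X, a ≠ b ∧ a ≠ d ∧ b ≠ d ∧ c a b = c b d ∧ c a b = c a d := by
  open ErdosRadoTriangle in
  have hX' : 2 ^ lam < #X := (Order.lt_succ _).trans_le hX
  have : Nonempty X := mk_ne_zero_iff.mp (zero_le.trans_lt hX').ne'
  let W := (Order.succ lam).ord.ToType
  have hW : #W = Order.succ lam := mk_ord_toType _
  have hIio (w : W) : #(Iio w) ≤ lam := Order.lt_succ_iff.mp
    ((mk_Iio_lt w (by rw [hW, Ordinal.type_toType])).trans_eq hW)
  obtain ⟨a, ha⟩ : ∃ a, a ∉ range fun p : Σ w : W, (Iio w → C) => canonicalSeq c p.1 p.2 := by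
    by_contra! h
    exact hX'.not_ge ((mk_le_of_surjective h).trans (mk_sigma_Iio_arrow_le hlam
      (hW ▸ Order.succ_le_of_lt (cantor lam)) hIio hC))
  exact exists_triangle_of_notMem_range_canonicalSeq c (hW ▸ hC.trans_lt (Order.lt_succ lam)) ha

/-- Erdős–Rado for triangles, `ℶ₁(λ)⁺ → (3)²_λ`: any symmetric coloring of pairs from
a set of size at least `(2^λ)⁺` with at most `λ` colors (`λ` infinite) admits three
distinct elements all of whose pairs get the same color. -/
theorem stmt16 {X C : Type u} (lam : Cardinal.{u}) (hlam : Cardinal.aleph0 ≤ lam)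
    (hC : Cardinal.mk C ≤ lam)
    (hX : Order.succ (2 ^ lam) ≤ Cardinal.mk X)
    (c : X → X → C) (hsymm : ∀ a b : X, c a b = c b a) :
    ∃ a b d : X, a ≠ b ∧ a ≠ d ∧ b ≠ d ∧ c a b = c b d ∧ c a b = c a d :=
  stmt16_general lam hlam hC hX c
end
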